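/- arXiv:2307.13942 — 7 statements merged into one kernel-verified Lean document; each statement's English description precedes it below -/
import Mathlib

section
/- Let n ≥ 3, let a_1, …, a_n be positive reals, let p = (x_1, …, x_n) satisfy ∑_{i=1}^n x_i²/a_i² = 1 and x_n ≠ 0, and let λ ∈ ℝ. Then the following are equivalent: (i) every u ∈ ℝ^n with ∑_{i=1}^n a_i^{-2} x_i u_i = 0 satisfies ∑_{i=1}^n a_i^{-2} u_i² = λ ∑_{i=1}^n u_i²; (ii) for every 1 ≤ α ≤ n−1 one has a_α^{-2} + a_n² x_n^{-2} x_α² a_α^{-4} = λ (1 + a_n^4 x_n^{-2} x_α² a_α^{-4}), and (1 − λ a_n²) x_α x_β = 0 for all 1 ≤ α ≠ β ≤ n−1. -/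
/-!
With `d i = 1/aᵢ² - λ` and `w i = xᵢ/aᵢ²`, condition (i) says that the diagonal quadratic form
`∑ dᵢ uᵢ²` vanishes on the hyperplane `w^⊥`. Since `w_N ≠ 0`, that hyperplane is the graph of
`u_N = -(∑_{i ≠ N} wᵢ uᵢ) / w_N` over the remaining coordinates, on which the form becomes
`∑_{i ≠ N} dᵢ vᵢ² + (d_N / w_N²) (∑_{i ≠ N} wᵢ vᵢ)²`. A quadratic form vanishes identically iff
its diagonal and off-diagonal coefficients do, and these are the two families of equations in (ii).
-/

open Finset

variable {ι : Type*} [DecidableEq ι]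

theorem forall_sum_mul_sq_add_mul_sq_sum_eq_zero_iff (s : Finset ι) (d w : ι → ℝ) (c : ℝ) :
    (∀ v : ι → ℝ, ∑ i ∈ s, d i * v i ^ 2 + c * (∑ i ∈ s, w i * v i) ^ 2 = 0) ↔
      (∀ i ∈ s, d i + c * w i ^ 2 = 0) ∧ ∀ i ∈ s, ∀ j ∈ s, i ≠ j → c * w i * w j = 0 := by
  constructor
  · intro h
    have diag : ∀ i ∈ s, d i + c * w i ^ 2 = 0 := fun i hi => by
      simpa [Pi.single_apply, hi] using h (Pi.single i 1)
    refine ⟨diag, fun i hi j hj hij => ?_⟩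
    have := h (Pi.single i 1 + Pi.single j 1)
    simp [Pi.single_apply, mul_add, add_sq, sum_add_distrib, hi, hj, Ne.symm hij] at this
    linear_combination (this - diag i hi - diag j hj) / 2
  · rintro ⟨diag, offdiag⟩ v
    have cross : c * (∑ i ∈ s, w i * v i) ^ 2 = ∑ i ∈ s, c * w i ^ 2 * v i ^ 2 := by
      rw [sq, sum_mul_sum, mul_sum]
      refine sum_congr rfl fun i hi => ?_
      rw [mul_sum, sum_eq_single_of_mem i hi fun j hj hji => ?_]
      · ring
      · linear_combination v i * v j * offdiag i hi j hj hji.symm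
    rw [cross, ← sum_add_distrib]
    exact sum_eq_zero fun i hi => by linear_combination v i ^ 2 * diag i hi

theorem sum_mul_sq_eq_of_sum_mul_eq_zero [Fintype ι] {d w u : ι → ℝ} {N : ι} (hw : w N ≠ 0)
    (hu : ∑ i, w i * u i = 0) :
    ∑ i, d i * u i ^ 2 = ∑ i ∈ univ.erase N, d i * u i ^ 2
      + d N / w N ^ 2 * (∑ i ∈ univ.erase N, w i * u i) ^ 2 := by
  rw [← add_sum_erase _ _ (mem_univ N)] at hu ⊢
  rw [show ∑ i ∈ univ.erase N, w i * u i = -(w N * u N) by linarith]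
  field_simp
  ring

theorem forall_sum_mul_eq_zero_imp_iff [Fintype ι] (d w : ι → ℝ) {N : ι} (hw : w N ≠ 0) :
    (∀ u : ι → ℝ, ∑ i, w i * u i = 0 → ∑ i, d i * u i ^ 2 = 0) ↔
      ∀ v : ι → ℝ, ∑ i ∈ univ.erase N, d i * v i ^ 2
        + d N / w N ^ 2 * (∑ i ∈ univ.erase N, w i * v i) ^ 2 = 0 := by
  refine ⟨fun h v => ?_, fun h u hu => sum_mul_sq_eq_of_sum_mul_eq_zero hw hu ▸ h u⟩
  set u := Function.update v N (-(∑ i ∈ univ.erase N, w i * v i) / w N)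
  have hvu : ∀ f : ι → ℝ → ℝ, ∑ i ∈ univ.erase N, f i (v i) = ∑ i ∈ univ.erase N, f i (u i) :=
    fun f => sum_congr rfl fun i hi => by
      rw [show u i = v i from Function.update_of_ne (ne_of_mem_erase hi) _ v]
  have hu : ∑ i, w i * u i = 0 := by
    rw [← add_sum_erase _ _ (mem_univ N), ← hvu fun i t => w i * t]
    simp only [u, Function.update_self]
    field_simp
    ring
  have := h u hu
  rwa [sum_mul_sq_eq_of_sum_mul_eq_zero hw hu, ← hvu fun i t => d i * t ^ 2,
    ← hvu fun i t => w i * t] at this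

theorem ellipsoid_umbilic_iff [Fintype ι] (a x : ι → ℝ) (ha : ∀ i, a i ≠ 0) {N : ι}
    (hxN : x N ≠ 0) (lam : ℝ) :
    (∀ u : ι → ℝ, (∑ i, x i * u i / a i ^ 2 = 0) →
        ∑ i, u i ^ 2 / a i ^ 2 = lam * ∑ i, u i ^ 2) ↔
      ((∀ α, α ≠ N →
          1 / a α ^ 2 + a N ^ 2 / x N ^ 2 * x α ^ 2 / a α ^ 4
            = lam * (1 + a N ^ 4 / x N ^ 2 * x α ^ 2 / a α ^ 4)) ∧
        (∀ α β, α ≠ N → β ≠ N → α ≠ β → (1 - lam * a N ^ 2) * x α * x β = 0)) := by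
  set d : ι → ℝ := fun i => 1 / a i ^ 2 - lam
  set w : ι → ℝ := fun i => x i / a i ^ 2
  have hwN : w N ≠ 0 := div_ne_zero hxN (pow_ne_zero _ (ha N))
  have tangent (u : ι → ℝ) : ∑ i, x i * u i / a i ^ 2 = ∑ i, w i * u i :=
    sum_congr rfl fun i _ => by ring
  have umbilic (u : ι → ℝ) :
      ∑ i, u i ^ 2 / a i ^ 2 = lam * ∑ i, u i ^ 2 ↔ ∑ i, d i * u i ^ 2 = 0 := by
    rw [← sub_eq_zero, mul_sum, ← sum_sub_distrib]
    exact Eq.congr_left (sum_congr rfl fun i _ => by ring)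
  have diag (α : ι) : d α + d N / w N ^ 2 * w α ^ 2
      = 1 / a α ^ 2 + a N ^ 2 / x N ^ 2 * x α ^ 2 / a α ^ 4
        - lam * (1 + a N ^ 4 / x N ^ 2 * x α ^ 2 / a α ^ 4) := by
    simp only [d, w]
    field_simp [ha α, ha N, hxN]
    ring
  have offdiag (α β : ι) : d N / w N ^ 2 * w α * w β
      = (1 - lam * a N ^ 2) * x α * x β * (a N ^ 2 / (x N ^ 2 * a α ^ 2 * a β ^ 2)) := by
    simp only [d, w]
    field_simp [ha α, ha β, ha N, hxN]
  have hfactor (α β : ι) : a N ^ 2 / (x N ^ 2 * a α ^ 2 * a β ^ 2) ≠ 0 := by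
    have := ha α; have := ha β; have := ha N
    positivity
  simp only [tangent, umbilic, forall_sum_mul_eq_zero_imp_iff d w hwN,
    forall_sum_mul_sq_add_mul_sq_sum_eq_zero_iff, mem_erase, mem_univ, and_true, diag, offdiag,
    sub_eq_zero, mul_eq_zero_iff_right (hfactor _ _)]
  exact and_congr_right fun _ =>
    ⟨fun h α β hα hβ => h α hα β hβ, fun h α hα β hβ => h α β hα hβ⟩

/-- **Umbilic criterion on an ellipsoid, componentwise form.**
Let `n ≥ 3`, let `a₁, …, aₙ` be positive reals, let `p = (x₁, …, xₙ)` satisfy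
`∑ xᵢ²/aᵢ² = 1` with `xₙ ≠ 0`, and let `λ ∈ ℝ`.  Then the proportionality condition
(i) on tangent vectors is equivalent to the system (ii) of scalar equations. -/
theorem stmt_0 (n : ℕ) (hn : 3 ≤ n) (a x : Fin n → ℝ)
    (ha : ∀ i, 0 < a i)
    (hxn : x ⟨n - 1, by omega⟩ ≠ 0) (lam : ℝ) :
    (∀ u : Fin n → ℝ, (∑ i, x i * u i / a i ^ 2 = 0) →
        ∑ i, u i ^ 2 / a i ^ 2 = lam * ∑ i, u i ^ 2) ↔
      ((∀ α : Fin n, α ≠ ⟨n - 1, by omega⟩ →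
          1 / a α ^ 2 +
              a ⟨n - 1, by omega⟩ ^ 2 / x ⟨n - 1, by omega⟩ ^ 2 * x α ^ 2 / a α ^ 4
            = lam * (1 + a ⟨n - 1, by omega⟩ ^ 4 / x ⟨n - 1, by omega⟩ ^ 2
                * x α ^ 2 / a α ^ 4)) ∧
        (∀ α β : Fin n, α ≠ ⟨n - 1, by omega⟩ → β ≠ ⟨n - 1, by omega⟩ → α ≠ β →
          (1 - lam * a ⟨n - 1, by omega⟩ ^ 2) * x α * x β = 0)) :=
  ellipsoid_umbilic_iff a x (fun i => (ha i).ne') hxn lam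
end

section
/- Let a_1 < a_2 < a_3 be positive reals and let Σ = {x ∈ ℝ³ : x_1²/a_1² + x_2²/a_2² + x_3²/a_3² = 1}. Then a point p = (x_1, x_2, x_3) ∈ Σ is umbilic if and only if x_2 = 0, x_1 = ± a_1 √((a_2² − a_1²)/(a_3² − a_1²)) and x_3 = ± a_3 √((a_3² − a_2²)/(a_3² − a_1²)); in particular Σ has exactly four umbilic points (all four sign combinations). -/
/-!
Write `nᵢ = xᵢ / aᵢ²` for the normal and `cᵢ = aᵢ⁻² - λ`. Umbilicity says that the diagonal
form `∑ cᵢ uᵢ²` vanishes on `n⊥`; testing it on `nⱼ eᵢ - nᵢ eⱼ` gives `cᵢ nⱼ² + cⱼ nᵢ² = 0` for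
`i ≠ j`. As `c₁ > c₂ > c₃`, these three relations force `n₂ = 0` and `c₂ = 0`, so `λ = a₂⁻²`,
and the remaining relation `c₁ n₃² + c₃ n₁² = 0` together with the equation of the ellipsoid is
a linear system in `x₁², x₃²`. Conversely, when `n₂ = c₂ = 0` the form only involves `u₁, u₃`,
and the same relation makes it vanish on the tangent line `n₁ u₁ + n₃ u₃ = 0`.
-/

open Finset

/-- A point `x` on the ellipsoid `∑ xᵢ²/aᵢ² = 1` with semi-axes `a` is *umbilic* if the
second fundamental form at `x` is proportional to the induced metric, i.e. there is
`λ ∈ ℝ` such that every tangent vector `u` (i.e. `∑ aᵢ⁻² xᵢ uᵢ = 0`) satisfies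
`∑ aᵢ⁻² uᵢ² = λ ∑ uᵢ²`. -/
def IsUmbilic {n : ℕ} (a x : Fin n → ℝ) : Prop :=
  ∃ lam : ℝ, ∀ u : Fin n → ℝ,
    (∑ i, x i * u i / a i ^ 2 = 0) → ∑ i, u i ^ 2 / a i ^ 2 = lam * ∑ i, u i ^ 2

theorem IsUmbilic.exists_pair_identity {n : ℕ} {a x : Fin n → ℝ} (h : IsUmbilic a x) :
    ∃ lam : ℝ, ∀ i j, i ≠ j →
      (1 / a i ^ 2 - lam) * (x j / a j ^ 2) ^ 2 +
        (1 / a j ^ 2 - lam) * (x i / a i ^ 2) ^ 2 = 0 := by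
  obtain ⟨lam, h⟩ := h
  refine ⟨lam, fun i j hij => ?_⟩
  set u : Fin n → ℝ := fun k =>
    if k = i then x j / a j ^ 2 else if k = j then -(x i / a i ^ 2) else 0
  have hui : u i = x j / a j ^ 2 := if_pos rfl
  have huj : u j = -(x i / a i ^ 2) := by simp [u, hij.symm]
  have hu : ∀ k, k ≠ i ∧ k ≠ j → u k = 0 := fun k ⟨hki, hkj⟩ => by simp [u, hki, hkj]
  have hform := h u (by
    rw [Fintype.sum_eq_add i j hij (fun k hk => by simp [hu k hk]), hui, huj]
    ring)
  rw [Fintype.sum_eq_add i j hij (fun k hk => by simp [hu k hk]),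
    Fintype.sum_eq_add i j hij (fun k hk => by simp [hu k hk]), hui, huj] at hform
  linear_combination hform

theorem middle_eq_zero_of_pair_identities {c₁ c₂ c₃ n₁ n₂ n₃ : ℝ} (h₁₂ : c₂ < c₁) (h₂₃ : c₃ < c₂)
    (hn : n₁ ≠ 0 ∨ n₂ ≠ 0 ∨ n₃ ≠ 0)
    (e₁₂ : c₁ * n₂ ^ 2 + c₂ * n₁ ^ 2 = 0) (e₁₃ : c₁ * n₃ ^ 2 + c₃ * n₁ ^ 2 = 0)
    (e₂₃ : c₂ * n₃ ^ 2 + c₃ * n₂ ^ 2 = 0) : n₂ = 0 ∧ c₂ = 0 := by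
  have hc : c₁ * c₃ * n₂ ^ 2 = 0 := by
    linear_combination (-1/2 : ℝ) * (c₂ * e₁₃ - c₁ * e₂₃ - c₃ * e₁₂)
  -- If `c₁ = 0` (resp. `c₃ = 0`), the terms of `e₂₃` (resp. `e₁₂`) share a sign, one strictly.
  have hn₂ : n₂ = 0 := by
    by_contra hn₂
    rcases mul_eq_zero.1 ((mul_eq_zero.1 hc).resolve_right (pow_ne_zero 2 hn₂)) with h | h
    · nlinarith [sq_nonneg n₃, sq_pos_of_ne_zero hn₂]
    · nlinarith [sq_nonneg n₁, sq_pos_of_ne_zero hn₂]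
  subst hn₂
  refine ⟨rfl, ?_⟩
  rcases hn with h | h | h
  · simpa [h] using e₁₂
  · exact absurd rfl h
  · simpa [h] using e₂₃

theorem add_mul_sq_eq_zero_of_orthogonal {c₁ c₂ n₁ n₂ u₁ u₂ : ℝ} (hn : n₁ ≠ 0)
    (hc : c₁ * n₂ ^ 2 + c₂ * n₁ ^ 2 = 0) (hu : n₁ * u₁ + n₂ * u₂ = 0) :
    c₁ * u₁ ^ 2 + c₂ * u₂ ^ 2 = 0 := by
  have h : n₁ ^ 2 * (c₁ * u₁ ^ 2 + c₂ * u₂ ^ 2) = 0 := by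
    linear_combination u₂ ^ 2 * hc + c₁ * (n₁ * u₁ - n₂ * u₂) * hu
  exact (mul_eq_zero.1 h).resolve_left (pow_ne_zero 2 hn)

theorem ellipse_and_umbilic_relation_iff {a₁ a₂ a₃ x₁ x₃ : ℝ} (h₁ : 0 < a₁) (h₁₂ : a₁ < a₂)
    (h₂₃ : a₂ < a₃) :
    (x₁ ^ 2 / a₁ ^ 2 + x₃ ^ 2 / a₃ ^ 2 = 1 ∧
      (1 / a₁ ^ 2 - 1 / a₂ ^ 2) * (x₃ / a₃ ^ 2) ^ 2 +
        (1 / a₃ ^ 2 - 1 / a₂ ^ 2) * (x₁ / a₁ ^ 2) ^ 2 = 0) ↔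
    x₁ ^ 2 = a₁ ^ 2 * ((a₂ ^ 2 - a₁ ^ 2) / (a₃ ^ 2 - a₁ ^ 2)) ∧
      x₃ ^ 2 = a₃ ^ 2 * ((a₃ ^ 2 - a₂ ^ 2) / (a₃ ^ 2 - a₁ ^ 2)) := by
  have h₂ : 0 < a₂ := h₁.trans h₁₂
  have h₃ : 0 < a₃ := h₂.trans h₂₃
  have h₁₃ : a₃ ^ 2 - a₁ ^ 2 ≠ 0 := by nlinarith
  rw [div_pow x₁, div_pow x₃]
  constructor
  · rintro ⟨hell, hrel⟩
    field_simp at hell hrel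
    rw [mul_div_assoc', mul_div_assoc', eq_div_iff h₁₃, eq_div_iff h₁₃]
    constructor
    · refine mul_left_cancel₀ (pow_ne_zero 2 h₃.ne') ?_
      linear_combination (a₂ ^ 2 - a₁ ^ 2) * hell - hrel
    · refine mul_left_cancel₀ (pow_ne_zero 2 h₁.ne') ?_
      linear_combination hrel - (a₂ ^ 2 - a₃ ^ 2) * hell
  · rintro ⟨hx₁, hx₃⟩
    rw [hx₁, hx₃]
    constructor <;> field_simp <;> ring

theorem ellipsoid_and_isUmbilic_iff_sq {a₁ a₂ a₃ : ℝ} (h₁ : 0 < a₁) (h₁₂ : a₁ < a₂) (h₂₃ : a₂ < a₃)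
    (x₁ x₂ x₃ : ℝ) :
    (x₁ ^ 2 / a₁ ^ 2 + x₂ ^ 2 / a₂ ^ 2 + x₃ ^ 2 / a₃ ^ 2 = 1 ∧
      IsUmbilic ![a₁, a₂, a₃] ![x₁, x₂, x₃]) ↔
    x₂ = 0 ∧ x₁ ^ 2 = a₁ ^ 2 * ((a₂ ^ 2 - a₁ ^ 2) / (a₃ ^ 2 - a₁ ^ 2)) ∧
      x₃ ^ 2 = a₃ ^ 2 * ((a₃ ^ 2 - a₂ ^ 2) / (a₃ ^ 2 - a₁ ^ 2)) := by
  have h₂ : 0 < a₂ := h₁.trans h₁₂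
  constructor
  · rintro ⟨hell, hU⟩
    obtain ⟨lam, hpair⟩ := hU.exists_pair_identity
    have e₁₂ := hpair 0 1 (by decide)
    have e₁₃ := hpair 0 2 (by decide)
    have e₂₃ := hpair 1 2 (by decide)
    simp only [Matrix.cons_val_zero, Matrix.cons_val_one, Matrix.cons_val_two, Matrix.head_cons,
      Matrix.tail_cons] at e₁₂ e₁₃ e₂₃
    have hn : x₁ / a₁ ^ 2 ≠ 0 ∨ x₂ / a₂ ^ 2 ≠ 0 ∨ x₃ / a₃ ^ 2 ≠ 0 := by
      by_contra! h
      simp only [div_eq_zero_iff, pow_eq_zero_iff, ne_eq, OfNat.ofNat_ne_zero, not_false_eq_true,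
        h₁.ne', h₂.ne', (h₂.trans h₂₃).ne', or_false] at h
      simp [h] at hell
    obtain ⟨hn₂, hc₂⟩ := middle_eq_zero_of_pair_identities
      (by gcongr) (by gcongr) hn e₁₂ e₁₃ e₂₃
    have hx₂ : x₂ = 0 := (div_eq_zero_iff.1 hn₂).resolve_right (by positivity)
    rw [← sub_eq_zero.1 hc₂] at e₁₃
    subst hx₂
    exact ⟨rfl, (ellipse_and_umbilic_relation_iff h₁ h₁₂ h₂₃).1 ⟨by simpa using hell, e₁₃⟩⟩
  · rintro ⟨rfl, hx₁, hx₃⟩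
    obtain ⟨hell, hrel⟩ := (ellipse_and_umbilic_relation_iff h₁ h₁₂ h₂₃).2 ⟨hx₁, hx₃⟩
    refine ⟨by simpa using hell, 1 / a₂ ^ 2, fun u hu => ?_⟩
    simp only [Fin.sum_univ_three, Matrix.cons_val_zero, Matrix.cons_val_one, Matrix.cons_val_two,
      Matrix.head_cons, Matrix.tail_cons] at hu ⊢
    have hx₁ : x₁ / a₁ ^ 2 ≠ 0 := by
      have hpos : 0 < x₁ ^ 2 := by
        rw [hx₁]
        exact mul_pos (by positivity) (div_pos (by nlinarith) (by nlinarith))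
      exact div_ne_zero (by rintro rfl; simp at hpos) (by positivity)
    have hform := add_mul_sq_eq_zero_of_orthogonal hx₁ hrel (u₁ := u 0) (u₂ := u 2)
      (by linear_combination hu)
    linear_combination hform

theorem sq_eq_sq_mul_iff {x a r : ℝ} (hr : 0 ≤ r) :
    x ^ 2 = a ^ 2 * r ↔ x = a * Real.sqrt r ∨ x = -(a * Real.sqrt r) := by
  rw [← sq_eq_sq_iff_eq_or_eq_neg, mul_pow, Real.sq_sqrt hr]

theorem ellipsoid_and_isUmbilic_iff {a₁ a₂ a₃ : ℝ} (h₁ : 0 < a₁) (h₁₂ : a₁ < a₂) (h₂₃ : a₂ < a₃)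
    (x₁ x₂ x₃ : ℝ) :
    (x₁ ^ 2 / a₁ ^ 2 + x₂ ^ 2 / a₂ ^ 2 + x₃ ^ 2 / a₃ ^ 2 = 1 ∧
      IsUmbilic ![a₁, a₂, a₃] ![x₁, x₂, x₃]) ↔
    x₂ = 0 ∧
      (x₁ = a₁ * Real.sqrt ((a₂ ^ 2 - a₁ ^ 2) / (a₃ ^ 2 - a₁ ^ 2)) ∨
        x₁ = -(a₁ * Real.sqrt ((a₂ ^ 2 - a₁ ^ 2) / (a₃ ^ 2 - a₁ ^ 2)))) ∧
      (x₃ = a₃ * Real.sqrt ((a₃ ^ 2 - a₂ ^ 2) / (a₃ ^ 2 - a₁ ^ 2)) ∨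
        x₃ = -(a₃ * Real.sqrt ((a₃ ^ 2 - a₂ ^ 2) / (a₃ ^ 2 - a₁ ^ 2)))) := by
  have h₂ : 0 < a₂ := h₁.trans h₁₂
  rw [ellipsoid_and_isUmbilic_iff_sq h₁ h₁₂ h₂₃,
    sq_eq_sq_mul_iff (div_pos (by nlinarith) (by nlinarith)).le,
    sq_eq_sq_mul_iff (div_pos (by nlinarith) (by nlinarith)).le]

theorem ncard_eq_four_of_mem_iff {S : Set (Fin 3 → ℝ)} {c₁ c₃ : ℝ} (hc₁ : c₁ ≠ 0) (hc₃ : c₃ ≠ 0)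
    (hS : ∀ x₁ x₂ x₃, ![x₁, x₂, x₃] ∈ S ↔ x₂ = 0 ∧ (x₁ = c₁ ∨ x₁ = -c₁) ∧ (x₃ = c₃ ∨ x₃ = -c₃)) :
    S.ncard = 4 := by
  have hS' : S = (fun q : ℝ × ℝ => ![q.1, 0, q.2]) '' ({c₁, -c₁} ×ˢ {c₃, -c₃}) := by
    ext p
    obtain ⟨x₁, x₂, x₃, rfl⟩ : ∃ x₁ x₂ x₃, ![x₁, x₂, x₃] = p :=
      ⟨p 0, p 1, p 2, by ext i; fin_cases i <;> rfl⟩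
    rw [hS]
    constructor
    · rintro ⟨rfl, h₁, h₃⟩
      exact ⟨(x₁, x₃), ⟨h₁, h₃⟩, rfl⟩
    · rintro ⟨⟨s, t⟩, ⟨hs, ht⟩, h⟩
      obtain ⟨rfl, rfl, rfl⟩ : s = x₁ ∧ 0 = x₂ ∧ t = x₃ := by simpa using h
      exact ⟨rfl, hs, ht⟩
  have hinj : (fun q : ℝ × ℝ => ![q.1, 0, q.2]).Injective := fun q q' h =>
    Prod.ext (congrFun h 0) (congrFun h 2)
  rw [hS', Set.ncard_image_of_injective _ hinj, Set.ncard_prod,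
    Set.ncard_pair (self_ne_neg.2 hc₁), Set.ncard_pair (self_ne_neg.2 hc₃)]

/-- **Umbilic points of a generic three-dimensional ellipsoid.**
For `0 < a₁ < a₂ < a₃`, a point `(x₁, x₂, x₃)` on the ellipsoid
`x₁²/a₁² + x₂²/a₂² + x₃²/a₃² = 1` is umbilic iff `x₂ = 0`,
`x₁ = ± a₁ √((a₂² − a₁²)/(a₃² − a₁²))` and `x₃ = ± a₃ √((a₃² − a₂²)/(a₃² − a₁²))`;
in particular the ellipsoid has exactly four umbilic points. -/
theorem stmt_1 (a₁ a₂ a₃ : ℝ) (h₁ : 0 < a₁) (h₁₂ : a₁ < a₂) (h₂₃ : a₂ < a₃) :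
    (∀ x₁ x₂ x₃ : ℝ, x₁ ^ 2 / a₁ ^ 2 + x₂ ^ 2 / a₂ ^ 2 + x₃ ^ 2 / a₃ ^ 2 = 1 →
      (IsUmbilic ![a₁, a₂, a₃] ![x₁, x₂, x₃] ↔
        x₂ = 0 ∧
          (x₁ = a₁ * Real.sqrt ((a₂ ^ 2 - a₁ ^ 2) / (a₃ ^ 2 - a₁ ^ 2)) ∨
            x₁ = -(a₁ * Real.sqrt ((a₂ ^ 2 - a₁ ^ 2) / (a₃ ^ 2 - a₁ ^ 2)))) ∧
          (x₃ = a₃ * Real.sqrt ((a₃ ^ 2 - a₂ ^ 2) / (a₃ ^ 2 - a₁ ^ 2)) ∨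
            x₃ = -(a₃ * Real.sqrt ((a₃ ^ 2 - a₂ ^ 2) / (a₃ ^ 2 - a₁ ^ 2)))))) ∧
    {p : Fin 3 → ℝ |
        p 0 ^ 2 / a₁ ^ 2 + p 1 ^ 2 / a₂ ^ 2 + p 2 ^ 2 / a₃ ^ 2 = 1 ∧
        IsUmbilic ![a₁, a₂, a₃] p}.ncard = 4 := by
  have h₂ : 0 < a₂ := h₁.trans h₁₂
  have hc₁ : 0 < a₁ * Real.sqrt ((a₂ ^ 2 - a₁ ^ 2) / (a₃ ^ 2 - a₁ ^ 2)) :=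
    mul_pos h₁ (Real.sqrt_pos.2 (div_pos (by nlinarith) (by nlinarith)))
  have hc₃ : 0 < a₃ * Real.sqrt ((a₃ ^ 2 - a₂ ^ 2) / (a₃ ^ 2 - a₁ ^ 2)) :=
    mul_pos (h₂.trans h₂₃) (Real.sqrt_pos.2 (div_pos (by nlinarith) (by nlinarith)))
  refine ⟨fun x₁ x₂ x₃ hell => ?_, ncard_eq_four_of_mem_iff hc₁.ne' hc₃.ne' fun x₁ x₂ x₃ =>
    ellipsoid_and_isUmbilic_iff h₁ h₁₂ h₂₃ x₁ x₂ x₃⟩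
  rw [← ellipsoid_and_isUmbilic_iff h₁ h₁₂ h₂₃, and_iff_right hell]
end

section
/- Let n ≥ 4 and let 0 < a_1 < a_2 < ⋯ < a_n. Then the ellipsoid Σ = {x ∈ ℝ^n : ∑_{i=1}^n x_i²/a_i² = 1} is totally non-umbilic, i.e., no point of Σ is umbilic. -/
open Finset

lemma sum_one_support {n : ℕ} (q : Fin n) (g : Fin n → ℝ)
    (h : ∀ m, m ≠ q → g m = 0) : ∑ m, g m = g q :=
  Finset.sum_eq_single q (fun m _ hm => h m hm) (fun h' => absurd (Finset.mem_univ q) h')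

lemma sum_three_support {n : ℕ} {i j k : Fin n} (hij : i ≠ j) (hik : i ≠ k) (hjk : j ≠ k)
    (g : Fin n → ℝ) (h0 : ∀ m, m ≠ i → m ≠ j → m ≠ k → g m = 0) :
    ∑ m, g m = g i + g j + g k := by
  classical
  rw [← Finset.sum_subset (Finset.subset_univ ({i, j, k} : Finset (Fin n)))
    (fun m _ hm => by
      simp only [Finset.mem_insert, Finset.mem_singleton, not_or] at hm
      exact h0 m hm.1 hm.2.1 hm.2.2)]
  rw [show ({i, j, k} : Finset (Fin n)) = insert i (insert j {k}) from rfl]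
  rw [Finset.sum_insert (by simp [hij, hik]), Finset.sum_insert (by simp [hjk]),
    Finset.sum_singleton, add_assoc]

/-- **Higher-dimensional generic ellipsoids are totally non-umbilic.**
For `n ≥ 4` and `0 < a₁ < a₂ < ⋯ < aₙ`, no point of the ellipsoid
`∑ xᵢ²/aᵢ² = 1` is umbilic. -/
theorem stmt_2 (n : ℕ) (hn : 4 ≤ n) (a : Fin n → ℝ) (ha : ∀ i, 0 < a i)
    (hmono : StrictMono a) (x : Fin n → ℝ)
    (hx : ∑ i, x i ^ 2 / a i ^ 2 = 1) : ¬ IsUmbilic a x := by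
  classical
  rintro ⟨lam, hlam⟩
  have ha0 : ∀ i, a i ≠ 0 := fun i => (ha i).ne'
  -- injectivity of 1/a i ^ 2
  have dinj : ∀ i j : Fin n, 1 / a i ^ 2 - lam = 0 → 1 / a j ^ 2 - lam = 0 → i = j := by
    intro i j hi hj
    have h2 : a i ^ 2 = a j ^ 2 := by
      have : (1:ℝ) / a i ^ 2 = 1 / a j ^ 2 := by linarith
      rw [div_eq_div_iff (pow_pos (ha i) 2).ne' (pow_pos (ha j) 2).ne'] at this
      linarith
    have : a i = a j := by
      nlinarith [ha i, ha j]
    exact hmono.injective this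
  -- key algebraic fact
  have key : ∀ i j k : Fin n, i ≠ j → i ≠ k → j ≠ k →
      (1 / a j ^ 2 - lam) * (x i / a i ^ 2) * (x k / a k ^ 2) = 0 := by
    intro i j k hij hik hjk
    have main : ∀ p q r : ℝ,
        x i * p / a i ^ 2 + x j * q / a j ^ 2 + x k * r / a k ^ 2 = 0 →
        p ^ 2 / a i ^ 2 + q ^ 2 / a j ^ 2 + r ^ 2 / a k ^ 2 = lam * (p ^ 2 + q ^ 2 + r ^ 2) := by
      intro p q r htan
      set u : Fin n → ℝ := fun m => if m = i then p else if m = j then q else if m = k then r else 0 with hu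
      have hui : u i = p := by simp [hu]
      have huj : u j = q := by simp [hu, hij.symm]
      have huk : u k = r := by simp [hu, hik.symm, hjk.symm]
      have hu0 : ∀ m, m ≠ i → m ≠ j → m ≠ k → u m = 0 := by
        intro m h1 h2 h3; simp [hu, h1, h2, h3]
      have htan' : ∑ m, x m * u m / a m ^ 2 = 0 := by
        rw [sum_three_support hij hik hjk _ (fun m h1 h2 h3 => by rw [hu0 m h1 h2 h3]; ring)]
        rw [hui, huj, huk]; exact htan
      have hres := hlam u htan'
      rw [sum_three_support hij hik hjk _ (fun m h1 h2 h3 => by rw [hu0 m h1 h2 h3]; ring),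
        sum_three_support hij hik hjk _ (fun m h1 h2 h3 => by rw [hu0 m h1 h2 h3]; ring),
        hui, huj, huk] at hres
      exact hres
    set ci := x i / a i ^ 2
    set cj := x j / a j ^ 2
    set ck := x k / a k ^ 2
    have E1 := main cj (-ci) 0 (by simp only [ci, cj]; ring)
    have E2 := main 0 ck (-cj) (by simp only [cj, ck]; ring)
    have E3 := main cj (ck - ci) (-cj) (by simp only [ci, cj, ck]; ring)
    linear_combination (E1 + E2 - E3) / 2
  -- x is nonzero somewhere
  have hp : ∃ p, x p ≠ 0 := by
    by_contra h
    push_neg at h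
    rw [Finset.sum_eq_zero (fun m _ => by rw [h m]; ring)] at hx
    norm_num at hx
  obtain ⟨p, hp⟩ := hp
  by_cases hq : ∃ q, q ≠ p ∧ x q ≠ 0
  · obtain ⟨q, hqp, hq⟩ := hq
    -- find j outside {p, q} with 1/a j^2 - lam ≠ 0
    set s : Finset (Fin n) := Finset.univ \ {p, q} with hs
    have hcs : 2 ≤ s.card := by
      rw [hs, Finset.card_sdiff_of_subset (Finset.subset_univ _), Finset.card_univ, Fintype.card_fin]
      have : ({p, q} : Finset (Fin n)).card ≤ 2 := Finset.card_insert_le _ _ |>.trans (by simp)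
      omega
    set Z : Finset (Fin n) := s.filter (fun i => 1 / a i ^ 2 - lam = 0) with hZ
    have hcZ : Z.card ≤ 1 := Finset.card_le_one.mpr (by
      intro u hu v hv
      rw [hZ, Finset.mem_filter] at hu hv
      exact dinj u v hu.2 hv.2)
    have hne : (s \ Z).Nonempty := by
      rw [Finset.sdiff_nonempty]
      intro hsub
      have := Finset.card_le_card hsub
      omega
    obtain ⟨j, hj⟩ := hne
    rw [Finset.mem_sdiff] at hj
    have hjs : j ∈ s := hj.1
    have hjpq : j ∉ ({p, q} : Finset (Fin n)) := (Finset.mem_sdiff.mp hjs).2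
    simp only [Finset.mem_insert, Finset.mem_singleton, not_or] at hjpq
    have hdj : 1 / a j ^ 2 - lam ≠ 0 := fun h => hj.2 (by rw [hZ, Finset.mem_filter]; exact ⟨hjs, h⟩)
    have := key p j q (Ne.symm hjpq.1) hqp.symm hjpq.2
    have hcp : x p / a p ^ 2 ≠ 0 := div_ne_zero hp (pow_ne_zero _ (ha0 p))
    have hcq : x q / a q ^ 2 ≠ 0 := div_ne_zero hq (pow_ne_zero _ (ha0 q))
    exact (mul_ne_zero (mul_ne_zero hdj hcp) hcq) this
  · push_neg at hq
    -- all coordinates except p vanish; then every basis vector e_q (q ≠ p) is tangent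
    have hd0 : ∀ q : Fin n, q ≠ p → 1 / a q ^ 2 - lam = 0 := by
      intro q hqp
      set u : Fin n → ℝ := fun m => if m = q then 1 else 0 with hu
      have hu0 : ∀ m, m ≠ q → u m = 0 := by intro m hm; simp [hu, hm]
      have htan : ∑ m, x m * u m / a m ^ 2 = 0 := by
        rw [sum_one_support q _ (fun m hm => by rw [hu0 m hm]; ring)]
        simp [hu, hq q hqp]
      have hres := hlam u htan
      rw [sum_one_support q _ (fun m hm => by rw [hu0 m hm]; ring),
        sum_one_support q _ (fun m hm => by rw [hu0 m hm]; ring)] at hres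
      simp only [hu, if_pos rfl] at hres
      norm_num at hres
      rw [one_div]
      linarith
    -- two distinct indices other than p
    have hcard : 1 < (Finset.univ \ {p} : Finset (Fin n)).card := by
      rw [Finset.card_sdiff_of_subset (Finset.subset_univ _), Finset.card_univ, Fintype.card_fin]
      simp only [Finset.card_singleton]
      omega
    obtain ⟨q1, hq1, q2, hq2, hq12⟩ := Finset.one_lt_card.mp hcard
    rw [Finset.mem_sdiff, Finset.mem_singleton] at hq1 hq2
    exact hq12 (dinj q1 q2 (hd0 q1 hq1.2) (hd0 q2 hq2.2))
end

section
/- Let n ≥ 3, let a_1, …, a_n be positive reals, let p = (x_1, …, x_n) ∈ Σ, and set S = ∑_{i=1}^n a_i^{-4} x_i² (note S > 0 since p ≠ 0). Then p is umbilic if and only if ∑_{i=1}^n a_i^{-4} − 2 S^{-1} ∑_{i=1}^n a_i^{-8} x_i² + S^{-2} (∑_{i=1}^n a_i^{-6} x_i²)² = (1/(n−1)) (∑_{i=1}^n a_i^{-2} − S^{-1} ∑_{i=1}^n a_i^{-6} x_i²)². -/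
/-!
Put `v = (xᵢ / aᵢ²)`, the normal direction at `p`, `A = diag (aᵢ⁻²)`, and let
`P = 1 - v vᵀ / |v|²` be the orthogonal projection onto the tangent hyperplane. A symmetric
matrix is determined by its quadratic form, so `p` is umbilic iff `P A P = λ P` for some `λ`.
Since `P` is a symmetric idempotent of trace `n - 1` and `(P A P) P = P A P`, the equality case
of Cauchy–Schwarz for the Frobenius inner product turns this into
`tr ((P A P)²) = (tr (P A P))² / (n - 1)`, and both traces are explicit:
`tr (P A P) = tr A - vᵀAv / |v|²` and `tr ((P A P)²) = tr A² - 2 vᵀA²v / |v|² + (vᵀAv)² / |v|⁴`.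
-/

open Finset

open Matrix

namespace Matrix

variable {ι : Type*} [Fintype ι]

theorem IsSymm.trace_mul_self_eq_zero_iff {A : Matrix ι ι ℝ} (hA : A.IsSymm) :
    (A * A).trace = 0 ↔ A = 0 := by
  have : Aᴴ = A := by rw [conjTranspose_eq_transpose_of_trivial, hA.eq]
  rw [← trace_conjTranspose_mul_self_eq_zero_iff, this]

theorem exists_eq_smul_iff_trace_mul_self {T P : Matrix ι ι ℝ} (hT : T.IsSymm) (hP : P.IsSymm)
    (hPP : P * P = P) (hTP : T * P = T) :
    (∃ r : ℝ, T = r • P) ↔ (T * T).trace = T.trace ^ 2 / P.trace := by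
  have hPT : P * T = T := by rw [← hP.eq, ← hT.eq, ← transpose_mul, hTP]
  rcases eq_or_ne P.trace 0 with htr | htr
  -- A symmetric idempotent of trace zero is zero; the right side then reads `0 = 0 / 0`.
  · have hP0 : P = 0 := hP.trace_mul_self_eq_zero_iff.mp (by rwa [hPP])
    have hT0 : T = 0 := by rw [← hTP, hP0, mul_zero]
    simp [hT0, hP0]
  constructor
  · rintro ⟨r, rfl⟩
    rw [smul_mul_smul_comm, hPP, trace_smul, trace_smul, smul_eq_mul, smul_eq_mul]
    field_simp
  · intro h
    -- With `μ = tr T / tr P`, `tr ((T - μ P)²) = tr (T²) - (tr T)² / tr P`.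
    refine ⟨T.trace / P.trace, sub_eq_zero.mp
      ((hT.sub (hP.smul _)).trace_mul_self_eq_zero_iff.mp ?_)⟩
    simp only [sub_mul, mul_sub, Matrix.smul_mul, Matrix.mul_smul, smul_smul, hPP, hTP, hPT,
      trace_sub, trace_smul, smul_eq_mul, h]
    field_simp
    ring

theorem IsSymm.transpose_mul_mul {A : Matrix ι ι ℝ} (hA : A.IsSymm) (B : Matrix ι ι ℝ) :
    (Bᵀ * A * B).IsSymm := by
  simp only [IsSymm, transpose_mul, transpose_transpose, hA.eq, Matrix.mul_assoc]

theorem dotProduct_transpose_mul_mul_mulVec (A B : Matrix ι ι ℝ) (u : ι → ℝ) :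
    u ⬝ᵥ (Bᵀ * A * B) *ᵥ u = (B *ᵥ u) ⬝ᵥ A *ᵥ (B *ᵥ u) := by
  rw [← mulVec_mulVec, ← mulVec_mulVec, dotProduct_mulVec u, vecMul_transpose]

theorem trace_mul_vecMulVec (A : Matrix ι ι ℝ) (w v : ι → ℝ) :
    (A * vecMulVec w v).trace = v ⬝ᵥ A *ᵥ w := by
  rw [mul_vecMulVec, trace_vecMulVec, dotProduct_comm]

theorem trace_sub_smul_vecMulVec_sq (A : Matrix ι ι ℝ) (v : ι → ℝ) (s : ℝ) :
    ((A - s • vecMulVec (A *ᵥ v) v) * (A - s • vecMulVec (A *ᵥ v) v)).trace =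
      (A * A).trace - 2 * s * (v ⬝ᵥ (A * A) *ᵥ v) + s ^ 2 * (v ⬝ᵥ A *ᵥ v) ^ 2 := by
  have hcomm : (vecMulVec (A *ᵥ v) v * A).trace = (A * vecMulVec (A *ᵥ v) v).trace :=
    trace_mul_comm _ _
  have hsq : (vecMulVec (A *ᵥ v) v * vecMulVec (A *ᵥ v) v).trace = (v ⬝ᵥ A *ᵥ v) ^ 2 := by
    rw [vecMulVec_mul_vecMulVec, trace_vecMulVec, dotProduct_smul, dotProduct_comm v,
      smul_eq_mul, sq]
  simp only [sub_mul, mul_sub, Matrix.smul_mul, Matrix.mul_smul, smul_smul, trace_sub,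
    trace_smul, smul_eq_mul, hcomm, hsq, trace_mul_vecMulVec, mulVec_mulVec]
  ring

variable [DecidableEq ι]

theorem IsSymm.eq_zero_of_forall_dotProduct_mulVec_self {A : Matrix ι ι ℝ} (hA : A.IsSymm)
    (h : ∀ u, u ⬝ᵥ A *ᵥ u = 0) : A = 0 := by
  ext i j
  have hii := h (Pi.single i 1)
  have hjj := h (Pi.single j 1)
  have hij := h (Pi.single i 1 + Pi.single j 1)
  simp only [mulVec_add, dotProduct_add, add_dotProduct, mulVec_single_one,
    single_one_dotProduct, col_apply] at hii hjj hij
  rw [zero_apply]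
  linarith [hA.apply i j]

noncomputable def hyperplaneProjection (v : ι → ℝ) : Matrix ι ι ℝ :=
  1 - (v ⬝ᵥ v)⁻¹ • vecMulVec v v

theorem isSymm_hyperplaneProjection (v : ι → ℝ) : (hyperplaneProjection v).IsSymm := by
  simp [hyperplaneProjection, IsSymm, transpose_sub, transpose_smul, transpose_vecMulVec]

theorem hyperplaneProjection_mulVec_of_dotProduct_eq_zero {v u : ι → ℝ} (hu : v ⬝ᵥ u = 0) :
    hyperplaneProjection v *ᵥ u = u := by
  simp [hyperplaneProjection, sub_mulVec, smul_mulVec, vecMulVec_mulVec, hu]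

theorem vecMul_hyperplaneProjection_self {v : ι → ℝ} (hv : v ⬝ᵥ v ≠ 0) :
    v ᵥ* hyperplaneProjection v = 0 := by
  simp [hyperplaneProjection, vecMul_sub, vecMul_smul, vecMul_vecMulVec, hv]

theorem IsSymm.hyperplaneProjection_mul_mul {A : Matrix ι ι ℝ} (hA : A.IsSymm) (v : ι → ℝ) :
    (hyperplaneProjection v * A * hyperplaneProjection v).IsSymm := by
  simpa only [(isSymm_hyperplaneProjection v).eq] using
    hA.transpose_mul_mul (hyperplaneProjection v)

theorem dotProduct_hyperplaneProjection_mulVec {v : ι → ℝ} (hv : v ⬝ᵥ v ≠ 0) (u : ι → ℝ) :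
    v ⬝ᵥ hyperplaneProjection v *ᵥ u = 0 := by
  rw [dotProduct_mulVec, vecMul_hyperplaneProjection_self hv, zero_dotProduct]

theorem hyperplaneProjection_mul_self {v : ι → ℝ} (hv : v ⬝ᵥ v ≠ 0) :
    hyperplaneProjection v * hyperplaneProjection v = hyperplaneProjection v := by
  nth_rewrite 1 [hyperplaneProjection]
  rw [sub_mul, Matrix.smul_mul, vecMulVec_mul, vecMul_hyperplaneProjection_self hv]
  simp

theorem mul_hyperplaneProjection (A : Matrix ι ι ℝ) (v : ι → ℝ) :
    A * hyperplaneProjection v = A - (v ⬝ᵥ v)⁻¹ • vecMulVec (A *ᵥ v) v := by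
  rw [hyperplaneProjection, mul_sub, Matrix.mul_smul, mul_vecMulVec, mul_one]

theorem trace_mul_hyperplaneProjection (A : Matrix ι ι ℝ) (v : ι → ℝ) :
    (A * hyperplaneProjection v).trace = A.trace - (v ⬝ᵥ A *ᵥ v) / (v ⬝ᵥ v) := by
  rw [mul_hyperplaneProjection, trace_sub, trace_smul, trace_vecMulVec,
    dotProduct_comm (A *ᵥ v), smul_eq_mul, inv_mul_eq_div]

theorem trace_hyperplaneProjection {v : ι → ℝ} (hv : v ⬝ᵥ v ≠ 0) :
    (hyperplaneProjection v).trace = Fintype.card ι - 1 := by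
  rw [← one_mul (hyperplaneProjection v), trace_mul_hyperplaneProjection]
  simp [hv]

theorem trace_hyperplaneProjection_mul_mul {v : ι → ℝ} (hv : v ⬝ᵥ v ≠ 0) (A : Matrix ι ι ℝ) :
    (hyperplaneProjection v * A * hyperplaneProjection v).trace =
      A.trace - (v ⬝ᵥ A *ᵥ v) / (v ⬝ᵥ v) := by
  rw [trace_mul_cycle, hyperplaneProjection_mul_self hv, trace_mul_comm,
    trace_mul_hyperplaneProjection]

theorem trace_hyperplaneProjection_mul_mul_sq {v : ι → ℝ} (hv : v ⬝ᵥ v ≠ 0)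
    (A : Matrix ι ι ℝ) :
    (hyperplaneProjection v * A * hyperplaneProjection v *
        (hyperplaneProjection v * A * hyperplaneProjection v)).trace =
      (A * A).trace - 2 / (v ⬝ᵥ v) * (v ⬝ᵥ (A * A) *ᵥ v)
        + (v ⬝ᵥ A *ᵥ v) ^ 2 / (v ⬝ᵥ v) ^ 2 := by
  set P := hyperplaneProjection v
  have hPP : P * P = P := hyperplaneProjection_mul_self hv
  have hconj : P * A * P * (P * A * P) = P * (A * P * (A * P)) := by
    simp only [Matrix.mul_assoc]
    rw [← Matrix.mul_assoc P P, hPP]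
  rw [hconj, trace_mul_comm]
  simp only [Matrix.mul_assoc, hPP]
  rw [← Matrix.mul_assoc, mul_hyperplaneProjection, trace_sub_smul_vecMulVec_sq]
  field_simp

theorem exists_forall_dotProduct_mulVec_eq_iff_exists_eq_smul {A : Matrix ι ι ℝ}
    (hA : A.IsSymm) {v : ι → ℝ} (hv : v ⬝ᵥ v ≠ 0) :
    (∃ r : ℝ, ∀ u, v ⬝ᵥ u = 0 → u ⬝ᵥ A *ᵥ u = r * (u ⬝ᵥ u)) ↔
      ∃ r : ℝ, hyperplaneProjection v * A * hyperplaneProjection v =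
        r • hyperplaneProjection v := by
  set P := hyperplaneProjection v
  have hPt : Pᵀ = P := (isSymm_hyperplaneProjection v).eq
  have hPP : P * P = P := hyperplaneProjection_mul_self hv
  have hconj : ∀ B u, u ⬝ᵥ (P * B * P) *ᵥ u = (P *ᵥ u) ⬝ᵥ B *ᵥ (P *ᵥ u) := fun B u => by
    simpa only [hPt] using dotProduct_transpose_mul_mul_mulVec B P u
  have hP : ∀ u, u ⬝ᵥ P *ᵥ u = (P *ᵥ u) ⬝ᵥ P *ᵥ u := fun u => by
    simpa only [Matrix.mul_one, hPP, one_mulVec] using hconj 1 u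
  refine exists_congr fun r => ⟨fun h => ?_, fun h u hu => ?_⟩
  · have hsymm :=
      (hA.hyperplaneProjection_mul_mul v).sub ((isSymm_hyperplaneProjection v).smul r)
    refine sub_eq_zero.mp (hsymm.eq_zero_of_forall_dotProduct_mulVec_self fun u => ?_)
    rw [sub_mulVec, dotProduct_sub, smul_mulVec, dotProduct_smul, smul_eq_mul, hconj, hP,
      h _ (dotProduct_hyperplaneProjection_mulVec hv u), sub_self]
  · have hPu : P *ᵥ u = u := hyperplaneProjection_mulVec_of_dotProduct_eq_zero hu
    rw [← hPu, ← hconj, h, smul_mulVec, dotProduct_smul, smul_eq_mul, hPu]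

theorem exists_forall_dotProduct_mulVec_eq_iff {A : Matrix ι ι ℝ} (hA : A.IsSymm) {v : ι → ℝ}
    (hv : v ⬝ᵥ v ≠ 0) :
    (∃ r : ℝ, ∀ u, v ⬝ᵥ u = 0 → u ⬝ᵥ A *ᵥ u = r * (u ⬝ᵥ u)) ↔
      (A * A).trace - 2 / (v ⬝ᵥ v) * (v ⬝ᵥ (A * A) *ᵥ v) + (v ⬝ᵥ A *ᵥ v) ^ 2 / (v ⬝ᵥ v) ^ 2 =
        1 / ((Fintype.card ι : ℝ) - 1) * (A.trace - (v ⬝ᵥ A *ᵥ v) / (v ⬝ᵥ v)) ^ 2 := by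
  have hP := isSymm_hyperplaneProjection v
  have hPP := hyperplaneProjection_mul_self hv
  have hTP : hyperplaneProjection v * A * hyperplaneProjection v * hyperplaneProjection v =
      hyperplaneProjection v * A * hyperplaneProjection v := by
    rw [Matrix.mul_assoc _ (hyperplaneProjection v), hPP]
  rw [exists_forall_dotProduct_mulVec_eq_iff_exists_eq_smul hA hv,
    exists_eq_smul_iff_trace_mul_self (hA.hyperplaneProjection_mul_mul v) hP hPP hTP,
    trace_hyperplaneProjection_mul_mul_sq hv, trace_hyperplaneProjection_mul_mul hv,
    trace_hyperplaneProjection hv, one_div_mul_eq_div]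

end Matrix

theorem isUmbilic_iff_dotProduct {n : ℕ} (a x : Fin n → ℝ) :
    IsUmbilic a x ↔ ∃ r : ℝ, ∀ u, (fun i => x i / a i ^ 2) ⬝ᵥ u = 0 →
      u ⬝ᵥ diagonal (fun i => 1 / a i ^ 2) *ᵥ u = r * (u ⬝ᵥ u) := by
  have hvu : ∀ u, (fun i => x i / a i ^ 2) ⬝ᵥ u = ∑ i, x i * u i / a i ^ 2 := fun u =>
    sum_congr rfl fun i _ => by ring
  have hAu : ∀ u, u ⬝ᵥ diagonal (fun i => 1 / a i ^ 2) *ᵥ u = ∑ i, u i ^ 2 / a i ^ 2 := fun u =>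
    sum_congr rfl fun i _ => by rw [mulVec_diagonal]; ring
  have huu : ∀ u : Fin n → ℝ, u ⬝ᵥ u = ∑ i, u i ^ 2 := fun u =>
    sum_congr rfl fun i _ => (sq (u i)).symm
  simp only [IsUmbilic, hvu, hAu, huu]

theorem stmt_3_general (n : ℕ) (a x : Fin n → ℝ) (ha : ∀ i, 0 < a i)
    (hx : ∑ i, x i ^ 2 / a i ^ 2 = 1) :
    IsUmbilic a x ↔
      (∑ i, 1 / a i ^ 4) - 2 / (∑ i, x i ^ 2 / a i ^ 4) * (∑ i, x i ^ 2 / a i ^ 8)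
          + (∑ i, x i ^ 2 / a i ^ 6) ^ 2 / (∑ i, x i ^ 2 / a i ^ 4) ^ 2
        = (1 / ((n : ℝ) - 1)) *
            ((∑ i, 1 / a i ^ 2) - (∑ i, x i ^ 2 / a i ^ 6) / (∑ i, x i ^ 2 / a i ^ 4)) ^ 2 := by
  set A : Matrix (Fin n) (Fin n) ℝ := diagonal fun i => 1 / a i ^ 2
  set v : Fin n → ℝ := fun i => x i / a i ^ 2
  have hv : v ⬝ᵥ v ≠ 0 := by
    rw [Ne, dotProduct_self_eq_zero]
    intro hv0
    have hx0 : ∀ i, x i = 0 := fun i => by simpa [v, (ha i).ne'] using congrFun hv0 i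
    simp [hx0] at hx
  have hAA : (A * A).trace = ∑ i, 1 / a i ^ 4 := by
    simp only [A, diagonal_mul_diagonal, trace_diagonal]
    exact sum_congr rfl fun i _ => by ring
  have hvAAv : v ⬝ᵥ (A * A) *ᵥ v = ∑ i, x i ^ 2 / a i ^ 8 := by
    simp only [A, v, diagonal_mul_diagonal, mulVec_diagonal, dotProduct]
    exact sum_congr rfl fun i _ => by ring
  have hvAv : v ⬝ᵥ A *ᵥ v = ∑ i, x i ^ 2 / a i ^ 6 := by
    simp only [A, v, mulVec_diagonal, dotProduct]
    exact sum_congr rfl fun i _ => by ring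
  have hvv : v ⬝ᵥ v = ∑ i, x i ^ 2 / a i ^ 4 := sum_congr rfl fun i _ => by simp only [v]; ring
  rw [isUmbilic_iff_dotProduct, exists_forall_dotProduct_mulVec_eq_iff (isSymm_diagonal _) hv,
    hAA, hvAAv, hvAv, hvv, trace_diagonal, Fintype.card_fin]

/-- **Scalar umbilicity criterion for a general ellipsoid.**
With `S = ∑ aᵢ⁻⁴ xᵢ²`, a point `p = (x₁, …, xₙ)` on the ellipsoid is umbilic iff
`∑ aᵢ⁻⁴ − 2 S⁻¹ ∑ aᵢ⁻⁸ xᵢ² + S⁻² (∑ aᵢ⁻⁶ xᵢ²)²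
  = (1/(n−1)) (∑ aᵢ⁻² − S⁻¹ ∑ aᵢ⁻⁶ xᵢ²)²`. -/
theorem stmt_3 (n : ℕ) (hn : 3 ≤ n) (a x : Fin n → ℝ) (ha : ∀ i, 0 < a i)
    (hx : ∑ i, x i ^ 2 / a i ^ 2 = 1) :
    IsUmbilic a x ↔
      (∑ i, 1 / a i ^ 4) - 2 / (∑ i, x i ^ 2 / a i ^ 4) * (∑ i, x i ^ 2 / a i ^ 8)
          + (∑ i, x i ^ 2 / a i ^ 6) ^ 2 / (∑ i, x i ^ 2 / a i ^ 4) ^ 2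
        = (1 / ((n : ℝ) - 1)) *
            ((∑ i, 1 / a i ^ 2) - (∑ i, x i ^ 2 / a i ^ 6) / (∑ i, x i ^ 2 / a i ^ 4)) ^ 2 :=
  stmt_3_general n a x ha hx
end

section
/- Let n ≥ 2 and let W be a real symmetric n×n matrix with tr W > 0 and (tr W)² > tr(W²) (equivalently, the eigenvalue vector of W lies in Γ_2^+). Then the operator norm of W is strictly less than tr W; in particular |W_{ij}| < tr W for all indices i, j, and both matrices (tr W)·I − W and (tr W)·I + W are positive definite. -/
/-!
The operator norm of `W` is at most its Frobenius norm `√(∑ W_ij²)`, and for symmetric `W` this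
is `√tr(W²) < tr W`. The entries are bounded by the Frobenius norm as well, and
`|⟪x, W x⟫| ≤ ‖W‖ ‖x‖² < tr W ‖x‖²` makes `tr W • 1 ∓ W` positive definite.
-/

open Matrix

namespace Matrix

variable {m n R : Type*} [Fintype m] [Fintype n]

theorem trace_mul_transpose_self [CommSemiring R] (A : Matrix m n R) :
    trace (A * Aᵀ) = ∑ i, ∑ j, A i j ^ 2 := by
  simp only [trace, diag, mul_apply, transpose_apply, sq]

theorem abs_le_sqrt_sum_sq (A : Matrix m n ℝ) (i : m) (j : n) :
    |A i j| ≤ √(∑ k, ∑ l, A k l ^ 2) :=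
  Real.abs_le_sqrt <| calc
    A i j ^ 2 ≤ ∑ l, A i l ^ 2 :=
      Finset.single_le_sum (fun _ _ ↦ sq_nonneg _) (Finset.mem_univ j)
    _ ≤ ∑ k, ∑ l, A k l ^ 2 :=
      Finset.single_le_sum (f := fun k ↦ ∑ l, A k l ^ 2)
        (fun _ _ ↦ Finset.sum_nonneg fun _ _ ↦ sq_nonneg _) (Finset.mem_univ i)

theorem norm_toEuclideanLin_sq_le [DecidableEq n] (A : Matrix m n ℝ) (x : EuclideanSpace ℝ n) :
    ‖toEuclideanLin A x‖ ^ 2 ≤ (∑ i, ∑ j, A i j ^ 2) * ‖x‖ ^ 2 := by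
  simp only [EuclideanSpace.norm_sq_eq, Real.norm_eq_abs, sq_abs]
  rw [Finset.sum_mul]
  refine Finset.sum_le_sum fun i _ ↦ ?_
  simpa [mulVec, dotProduct] using Finset.sum_mul_sq_le_sq_mul_sq Finset.univ (A i) x

theorem opNorm_toEuclideanLin_le_sqrt_sum_sq [DecidableEq n] (A : Matrix m n ℝ) :
    ‖LinearMap.toContinuousLinearMap (toEuclideanLin A)‖ ≤ √(∑ i, ∑ j, A i j ^ 2) := by
  refine ContinuousLinearMap.opNorm_le_bound _ (Real.sqrt_nonneg _) fun x ↦ ?_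
  have hF : 0 ≤ ∑ i, ∑ j, A i j ^ 2 := by positivity
  rw [← Real.sqrt_sq (norm_nonneg x), ← Real.sqrt_mul hF]
  exact Real.le_sqrt_of_sq_le (norm_toEuclideanLin_sq_le A x)

open scoped RealInnerProductSpace in
theorem abs_dotProduct_mulVec_le [DecidableEq n] (A : Matrix n n ℝ) (x : n → ℝ) :
    |x ⬝ᵥ A *ᵥ x| ≤ ‖LinearMap.toContinuousLinearMap (toEuclideanLin A)‖ * (x ⬝ᵥ x) := by
  set T := LinearMap.toContinuousLinearMap (toEuclideanLin A)
  set y : EuclideanSpace ℝ n := WithLp.toLp 2 x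
  have hy : ‖y‖ ^ 2 = x ⬝ᵥ x := by
    rw [← real_inner_self_eq_norm_sq, EuclideanSpace.inner_toLp_toLp, star_trivial]
  calc |x ⬝ᵥ A *ᵥ x| = |⟪y, T y⟫| := by rw [← inner_toEuclideanCLM]; rfl
    _ ≤ ‖y‖ * ‖T y‖ := abs_real_inner_le_norm _ _
    _ ≤ ‖y‖ * (‖T‖ * ‖y‖) := by gcongr; exact T.le_opNorm y
    _ = ‖T‖ * (x ⬝ᵥ x) := by rw [← hy]; ring

theorem posDef_smul_one_sub_of_opNorm_lt [DecidableEq n] {A : Matrix n n ℝ} (hA : A.IsHermitian)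
    {c : ℝ} (h : ‖LinearMap.toContinuousLinearMap (toEuclideanLin A)‖ < c) :
    (c • 1 - A).PosDef := by
  refine posDef_iff_dotProduct_mulVec.mpr ⟨(isHermitian_one.smul (.all c)).sub hA, fun x hx ↦ ?_⟩
  have hx : 0 < x ⬝ᵥ x := by simpa using dotProduct_star_self_pos_iff.mpr hx
  have hquad := (abs_le.mp (abs_dotProduct_mulVec_le A x)).2
  simp only [star_trivial, sub_mulVec, smul_mulVec, one_mulVec, dotProduct_sub, dotProduct_smul,
    smul_eq_mul]
  linarith [mul_lt_mul_of_pos_right h hx]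

end Matrix

theorem stmt_7_general (n : ℕ) (W : Matrix (Fin n) (Fin n) ℝ) (hW : W.IsSymm)
    (htr : 0 < Matrix.trace W)
    (h2 : Matrix.trace (W * W) < (Matrix.trace W) ^ 2) :
    ‖LinearMap.toContinuousLinearMap (Matrix.toEuclideanLin W)‖ < Matrix.trace W ∧
      (∀ i j, |W i j| < Matrix.trace W) ∧
      (Matrix.trace W • (1 : Matrix (Fin n) (Fin n) ℝ) - W).PosDef ∧
      (Matrix.trace W • (1 : Matrix (Fin n) (Fin n) ℝ) + W).PosDef := by
  have hfrob : √(∑ i, ∑ j, W i j ^ 2) < W.trace := by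
    rw [← trace_mul_transpose_self, hW.eq]
    exact (Real.sqrt_lt' htr).2 h2
  have hop := (opNorm_toEuclideanLin_le_sqrt_sum_sq W).trans_lt hfrob
  have hHerm : W.IsHermitian := isHermitian_iff_isSymm.mpr hW
  refine ⟨hop, fun i j ↦ (abs_le_sqrt_sum_sq W i j).trans_lt hfrob,
    posDef_smul_one_sub_of_opNorm_lt hHerm hop, ?_⟩
  rw [← sub_neg_eq_add]
  exact posDef_smul_one_sub_of_opNorm_lt hHerm.neg (by simpa using hop)

/-- **Entries and operator norm of a matrix in the `Γ₂⁺` cone are controlled by the trace.**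
Let `W` be a real symmetric `n×n` matrix (`n ≥ 2`) with `tr W > 0` and
`(tr W)² > tr(W²)`.  Then the operator norm of `W` (as an operator on Euclidean space)
is strictly less than `tr W`; in particular `|W_{ij}| < tr W` for all `i, j`, and both
`(tr W)·I − W` and `(tr W)·I + W` are positive definite. -/
theorem stmt_7 (n : ℕ) (hn : 2 ≤ n) (W : Matrix (Fin n) (Fin n) ℝ) (hW : W.IsSymm)
    (htr : 0 < Matrix.trace W)
    (h2 : Matrix.trace (W * W) < (Matrix.trace W) ^ 2) :
    ‖LinearMap.toContinuousLinearMap (Matrix.toEuclideanLin W)‖ < Matrix.trace W ∧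
      (∀ i j, |W i j| < Matrix.trace W) ∧
      (Matrix.trace W • (1 : Matrix (Fin n) (Fin n) ℝ) - W).PosDef ∧
      (Matrix.trace W • (1 : Matrix (Fin n) (Fin n) ℝ) + W).PosDef :=
  stmt_7_general n W hW htr h2
end

section
/- Let m ≥ 2, let C* > 0, and let μ = (μ_1, …, μ_m) ∈ ℝ^m with μ_1 = max_i μ_i. Assume 0 < σ_1(μ) ≤ C* and μ_1 > C*. Then σ_2(μ) ≤ C* μ_1 − (m/(2(m−1))) μ_1². -/
open Finset

/-!
Write `S = σ₁(μ)`, `Q = ∑ μᵢ²` and `x = μ₁`, so that `2 σ₂(μ) = S² - Q`. Cauchy–Schwarz on the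
remaining `m - 1` entries gives `(S - x)² ≤ (m - 1)(Q - x²)`, which bounds `2(m - 1) σ₂(μ)` by
`(m - 2) S² + 2 S x - m x²`; finally `0 < S ≤ C* < x` gives `S² ≤ C* x` and `S x ≤ C* x`.
-/

theorem sq_sum_eq_sum_sq_add_two_mul_sum_lt {ι R : Type*} [Fintype ι] [LinearOrder ι]
    [CommRing R] (f : ι → R) :
    (∑ i, f i) ^ 2 = ∑ i, f i ^ 2 + 2 * ∑ i, ∑ j with i < j, f i * f j := by
  have hrow (i : ι) : ∑ j, f i * f j =
      ∑ j with i < j, f i * f j + f i ^ 2 + ∑ j with j < i, f i * f j := by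
    have hdiag : f i ^ 2 = ∑ j, if j = i then f i * f j else 0 := by simp [sq]
    rw [sum_filter, sum_filter, hdiag, ← sum_add_distrib, ← sum_add_distrib]
    refine sum_congr rfl fun j _ => ?_
    rcases lt_trichotomy i j with h | rfl | h
    · simp [h, h.ne', h.not_gt]
    · simp
    · simp [h, h.ne, h.not_gt]
  have hswap : ∑ i, ∑ j with j < i, f i * f j = ∑ i, ∑ j with i < j, f i * f j := by
    rw [sum_comm' (t' := univ) (s' := fun j => univ.filter (j < ·)) (by simp)]
    simp_rw [mul_comm]
  rw [sq, sum_mul_sum]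
  simp only [hrow, sum_add_distrib, hswap]
  ring

theorem sq_sum_sub_le_card_sub_one_mul {ι R : Type*} [Fintype ι] [DecidableEq ι]
    [CommRing R] [LinearOrder R] [IsStrictOrderedRing R] (f : ι → R) (a : ι) :
    (∑ i, f i - f a) ^ 2 ≤ (Fintype.card ι - 1 : R) * (∑ i, f i ^ 2 - f a ^ 2) := by
  have h := sq_sum_le_card_mul_sum_sq (s := univ.erase a) (f := f)
  rwa [sum_erase_eq_sub (mem_univ a), sum_erase_eq_sub (mem_univ a),
    card_erase_of_mem (mem_univ a), card_univ, Nat.cast_pred (Fintype.card_pos_iff.2 ⟨a⟩)] at h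

theorem le_mul_sub_of_two_mul_eq_sq_sub {m S Q C x σ : ℝ} (hm : 2 ≤ m) (hS : 0 < S)
    (hSC : S ≤ C) (hCx : C < x) (hσ : 2 * σ = S ^ 2 - Q)
    (hQ : (S - x) ^ 2 ≤ (m - 1) * (Q - x ^ 2)) :
    σ ≤ C * x - m / (2 * (m - 1)) * x ^ 2 := by
  have hslack : 0 ≤ (m - 2) * (C * x) := mul_nonneg (by linarith) (by nlinarith)
  have key : 2 * (m - 1) * σ ≤ 2 * (m - 1) * C * x - m * x ^ 2 := calc
    2 * (m - 1) * σ = (m - 1) * S ^ 2 - (m - 1) * Q := by linear_combination (m - 1) * hσ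
    _ ≤ (m - 2) * (S * S) + 2 * (S * x) - m * x ^ 2 := by linarith
    _ ≤ (m - 2) * (C * x) + 2 * (C * x) - m * x ^ 2 := by gcongr <;> linarith
    _ ≤ 2 * (m - 1) * C * x - m * x ^ 2 := by linarith
  rw [div_mul_eq_mul_div, le_sub_iff_add_le, ← le_sub_iff_add_le', div_le_iff₀ (by linarith)]
  linarith

/-- **Quadratic upper bound for `σ₂` when the maximal entry exceeds `C*`.**
Let `m ≥ 2`, `C* > 0`, and let `μ ∈ ℝ^m` with `μ₁ = maxᵢ μᵢ`.  If `0 < σ₁(μ) ≤ C*`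
and `μ₁ > C*`, then `σ₂(μ) ≤ C* μ₁ − (m/(2(m−1))) μ₁²`. -/
theorem stmt_10 (m : ℕ) (hm : 2 ≤ m) (Cs : ℝ) (μ : Fin m → ℝ)
    (h1 : 0 < ∑ i, μ i) (h2 : ∑ i, μ i ≤ Cs)
    (h3 : Cs < μ ⟨0, by omega⟩) :
    ∑ i, ∑ j ∈ Finset.univ.filter (fun j => i < j), μ i * μ j ≤
      Cs * μ ⟨0, by omega⟩ -
        ((m : ℝ) / (2 * ((m : ℝ) - 1))) * μ ⟨0, by omega⟩ ^ 2 := by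
  have hσ := sq_sum_eq_sum_sq_add_two_mul_sum_lt μ
  have hQ := sq_sum_sub_le_card_sub_one_mul μ ⟨0, by omega⟩
  rw [Fintype.card_fin] at hQ
  exact le_mul_sub_of_two_mul_eq_sq_sub (by exact_mod_cast hm) h1 h2 h3 (by rw [hσ]; ring) hQ
end

section
/- Let δ ∈ (0, 1/2), b > 0, and let χ_1(r) = δ(2−δ)/(2r²) − b²/2 + (1−δ)b/r and χ_2(r) = δ(2−δ)/r² + (3−2δ)b/r − b² for r > 0. Then 2χ_1(r) − χ_2(r) = −b/r for all r > 0, and for every r with 0 < r < √(δ(2−δ))/(2b) one has χ_1(r) > δ(2−δ)/(4r²) and 3 χ_1(r) (2χ_1(r) − χ_2(r)) < −3 b δ(2−δ)/(4 r³). -/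
/-- **Key barrier inequality in dimension four.**
Let `δ ∈ (0, 1/2)`, `b > 0`, and set `χ₁(r) = δ(2−δ)/(2r²) − b²/2 + (1−δ)b/r` and
`χ₂(r) = δ(2−δ)/r² + (3−2δ)b/r − b²`.  Then `2χ₁ − χ₂ = −b/r` for all `r > 0`, and for
`0 < r < √(δ(2−δ))/(2b)` one has `χ₁(r) > δ(2−δ)/(4r²)` and
`3χ₁(r)(2χ₁(r) − χ₂(r)) < −3bδ(2−δ)/(4r³)`. -/
theorem stmt_13 (δ b : ℝ) (hδ : 0 < δ) (hδ' : δ < 1 / 2) (hb : 0 < b)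
    (χ₁ χ₂ : ℝ → ℝ)
    (hχ₁ : ∀ r, χ₁ r = δ * (2 - δ) / (2 * r ^ 2) - b ^ 2 / 2 + (1 - δ) * b / r)
    (hχ₂ : ∀ r, χ₂ r = δ * (2 - δ) / r ^ 2 + (3 - 2 * δ) * b / r - b ^ 2) :
    (∀ r, 0 < r → 2 * χ₁ r - χ₂ r = -b / r) ∧
      ∀ r, 0 < r → r < Real.sqrt (δ * (2 - δ)) / (2 * b) →
        δ * (2 - δ) / (4 * r ^ 2) < χ₁ r ∧
          3 * χ₁ r * (2 * χ₁ r - χ₂ r) < -(3 * b * δ * (2 - δ)) / (4 * r ^ 3) := by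
  have hkey : ∀ r, 0 < r → 2 * χ₁ r - χ₂ r = -b / r := by
    intro r hr
    rw [hχ₁, hχ₂]
    field_simp
    ring
  refine ⟨hkey, fun r hr hr' => ?_⟩
  have hδ2 : 0 < δ * (2 - δ) := by nlinarith
  have hbr : 2 * b * r < Real.sqrt (δ * (2 - δ)) := by
    rw [lt_div_iff₀ (by linarith)] at hr'
    linarith
  have hsq : (2 * b * r) ^ 2 < δ * (2 - δ) := by
    have hs := Real.sq_sqrt hδ2.le
    have hnn : 0 ≤ 2 * b * r := by positivity
    calc (2 * b * r) ^ 2 < Real.sqrt (δ * (2 - δ)) ^ 2 := by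
          exact pow_lt_pow_left₀ hbr hnn (by norm_num)
      _ = δ * (2 - δ) := hs
  have hb2 : b ^ 2 < δ * (2 - δ) / (4 * r ^ 2) := by
    rw [lt_div_iff₀ (by positivity)]
    nlinarith
  have h1 : δ * (2 - δ) / (4 * r ^ 2) < χ₁ r := by
    rw [hχ₁]
    have h1δ : 0 < (1 - δ) * b / r := by
      apply div_pos (mul_pos (by linarith) hb) hr
    have : δ * (2 - δ) / (2 * r ^ 2) - δ * (2 - δ) / (4 * r ^ 2) = δ * (2 - δ) / (4 * r ^ 2) := by
      field_simp; ring
    nlinarith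
  refine ⟨h1, ?_⟩
  rw [hkey r hr]
  have hb_r : 0 < b / r := div_pos hb hr
  have h3 : χ₁ r * (b / r) > δ * (2 - δ) / (4 * r ^ 2) * (b / r) :=
    (mul_lt_mul_of_pos_right h1 hb_r)
  have heq : -(3 * b * δ * (2 - δ)) / (4 * r ^ 3) = 3 * (-(δ * (2 - δ) / (4 * r ^ 2) * (b / r))) := by
    field_simp
  rw [heq]
  have hre : 3 * χ₁ r * (-b / r) = 3 * (-(χ₁ r * (b / r))) := by ring
  rw [hre]
  linarith
end
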